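/- Let β = 1/2 − 1/(2√3) and define the averaged numerical wavenumber of the prefactored PC4 scheme by K̄(z) = Im[(e^{iz} − 1)·conj((1 − β) + β·e^{iz})] / |(1 − β) + β·e^{iz}|². Then K̄(z) − z = O(z⁵) as z → 0; that is, the prefactored PC4 scheme preserves the fourth order of accuracy of the original compact scheme. -/

import Mathlib

open Complex Filter Asymptotics Topology

/-!
With `b₁ = 1` the numerator `Im[(e^{iz} - 1) · conj D(z)]` equals `sin z` whatever `β` is, while
`|D(z)|² = 1 - 2β(1 - β)(1 - cos z)`. The PC4 value of `β` is a root of `β(1 - β) = 1/6`, so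
`|D(z)|² = (2 + cos z)/3` and `K̄(z) = 3 sin z / (2 + cos z)`: the wavenumber of the classical
fourth-order Padé scheme. Its error is `(3 sin z - z(2 + cos z)) / (2 + cos z)`, and the Taylor
polynomials `z - z³/6` of `sin` and `1 - z²/2` of `cos` cancel in the numerator, leaving `O(z⁵)`.
-/

lemma im_exp_sub_one_mul_conj_prefactor (β z : ℝ) :
    ((exp (I * z) - 1) * (starRingEnd ℂ) (((1 - β : ℝ) : ℂ) + β * exp (I * z))).im =
      Real.sin z := by
  rw [mul_comm I, exp_mul_I]
  simp only [ofReal_sub, ofReal_one, map_add, map_sub, map_one, conj_ofReal, map_mul, conj_I, mul_neg,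
    mul_im, sub_re, add_re, cos_ofReal_re, mul_re, sin_ofReal_re, I_re, mul_zero, sin_ofReal_im, I_im,
    mul_one, sub_self, add_zero, one_re, add_im, sub_im, one_im, ofReal_im, ofReal_re, conj_im,
    cos_ofReal_im, neg_zero, neg_im, conj_re, zero_add, neg_re, zero_mul, sub_zero]
  ring

lemma norm_prefactor_sq (β z : ℝ) :
    ‖((1 - β : ℝ) : ℂ) + β * exp (I * z)‖ ^ 2 = 1 - 2 * (β * (1 - β)) * (1 - Real.cos z) := by
  rw [mul_comm I, exp_mul_I, Complex.sq_norm, normSq_apply]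
  simp only [ofReal_sub, ofReal_one, add_re, sub_re, one_re, ofReal_re, mul_re, cos_ofReal_re,
    sin_ofReal_re, I_re, mul_zero, sin_ofReal_im, I_im, mul_one, sub_self, add_zero, ofReal_im, add_im,
    cos_ofReal_im, mul_im, zero_add, zero_mul, sub_zero, sub_im, one_im]
  linear_combination β ^ 2 * Real.sin_sq_add_cos_sq z

lemma pc4_beta_mul_one_sub_beta :
    (1 / 2 - 1 / (2 * √3)) * (1 - (1 / 2 - 1 / (2 * √3))) = (1 / 6 : ℝ) := by
  have h3 : √3 ^ 2 = 3 := Real.sq_sqrt (by norm_num)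
  field_simp
  linear_combination 2 * h3

lemma three_mul_sin_sub_mul_two_add_cos_isBigO :
    (fun z : ℝ => 3 * Real.sin z - z * (2 + Real.cos z)) =O[𝓝 0] fun z => z ^ 5 := by
  refine IsBigO.of_bound 1 ?_
  filter_upwards [Metric.closedBall_mem_nhds (0 : ℝ) one_pos] with z hz
  have hz : |z| ≤ 1 := by simpa [Real.dist_eq] using hz
  have hsin := Real.sin_bound hz
  have hcos := mul_le_mul_of_nonneg_left (Real.cos_bound hz) (abs_nonneg z)
  set s := Real.sin z - (z - z ^ 3 / 6)
  set c := Real.cos z - (1 - z ^ 2 / 2)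
  have htaylor : 3 * Real.sin z - z * (2 + Real.cos z) = 3 * s - z * c := by ring
  rw [Real.norm_eq_abs, Real.norm_eq_abs, htaylor, abs_pow, one_mul]
  calc |3 * s - z * c| ≤ |3 * s| + |z * c| := abs_sub _ _
    _ = 3 * |s| + |z| * |c| := by rw [abs_mul, abs_mul, abs_of_pos three_pos]
    _ ≤ |z| ^ 5 := by nlinarith [pow_nonneg (abs_nonneg z) 5]

noncomputable def padeWavenumber (z : ℝ) : ℝ := 3 * Real.sin z / (2 + Real.cos z)

lemma padeWavenumber_sub_isBigO :
    (fun z => padeWavenumber z - z) =O[𝓝 0] fun z => z ^ 5 := by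
  have hpos (z : ℝ) : 0 < 2 + Real.cos z := by linarith [Real.neg_one_le_cos z]
  have hinv : (fun z : ℝ => (2 + Real.cos z)⁻¹) =O[𝓝 0] fun _ => (1 : ℝ) :=
    ((continuous_const.add Real.continuous_cos).inv₀ fun z => (hpos z).ne').continuousAt
      |>.tendsto.isBigO_one ℝ
  refine (three_mul_sin_sub_mul_two_add_cos_isBigO.mul hinv).congr (fun z => ?_)
    (fun z => mul_one _)
  rw [padeWavenumber]
  field_simp [(hpos z).ne']

/-- The averaged numerical wavenumber of the prefactored PC4 scheme
(`β = 1/2 − 1/(2√3)`, `b₁ = 1`) agrees with the exact wavenumber `z` up to `O(z^5)`: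
the prefactored scheme preserves the fourth order of accuracy. -/
theorem pc4_averaged_wavenumber_order
    (β : ℝ) (hβ : β = 1/2 - 1/(2 * Real.sqrt 3))
    (Kbar : ℝ → ℝ)
    (hK : ∀ z : ℝ, Kbar z =
      ((Complex.exp (Complex.I * (z : ℂ)) - 1) *
          (starRingEnd ℂ) (((1 - β : ℝ) : ℂ) + (β : ℂ) * Complex.exp (Complex.I * (z : ℂ)))).im /
        ‖((1 - β : ℝ) : ℂ) + (β : ℂ) * Complex.exp (Complex.I * (z : ℂ))‖ ^ 2) :
    (fun z : ℝ => Kbar z - z) =O[𝓝 (0 : ℝ)] fun z : ℝ => z ^ 5 := by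
  have hpade (z : ℝ) : Kbar z = padeWavenumber z := by
    rw [padeWavenumber, hK, im_exp_sub_one_mul_conj_prefactor, norm_prefactor_sq, hβ,
      pc4_beta_mul_one_sub_beta,
      show 1 - 2 * (1 / 6) * (1 - Real.cos z) = (2 + Real.cos z) / 3 by ring, div_div_eq_mul_div]
    ring
  simpa only [hpade] using padeWavenumber_sub_isBigO
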